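/- arXiv:1108.5266 — 2 statements merged into one kernel-verified Lean document; each statement's English description precedes it below -/
import Mathlib

section
/- Let ρ₁ < … < ρ_L be positive reals and N₁,…,N_L positive integers with ΣNᵣ = N. Define g(m) = −2/m³ + (1/M)Σᵣ 2Nᵣ ρᵣ³/(1 + ρᵣ m)³ for m in the open interval (−1/ρᵢ, −1/ρᵢ₊₁) (with 1 ≤ i ≤ L−1). Then g has at least one zero in this interval. -/
/-!
On `(-1/ρᵢ, -1/ρⱼ)` the function is continuous: its poles are `0` and the points `-1/ρᵣ`,
and since `r ↦ -1/ρᵣ` is strictly increasing, no pole lies strictly between the consecutive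
poles `-1/ρᵢ` and `-1/ρⱼ`. Near `-1/ρₖ` the sum is `cₖ/(1 + ρₖm)³` plus a term continuous
at `-1/ρₖ`, with `cₖ > 0`; as the cube is odd, this tends to `+∞` to the right of the pole and
to `-∞` to its left. So the function runs from `+∞` to `-∞` across the interval, and the
intermediate value theorem gives a zero.
-/

open Set Filter Topology

theorem exists_eq_of_tendsto_nhdsGT_atTop_of_tendsto_nhdsLT_atBot
    {α δ : Type*} [ConditionallyCompleteLinearOrder α] [TopologicalSpace α] [OrderTopology α]
    [DenselyOrdered α] [LinearOrder δ] [TopologicalSpace δ] [OrderClosedTopology δ]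
    {f : α → δ} {a b : α} (hab : a < b) (hf : ContinuousOn f (Ioo a b))
    (ha : Tendsto f (𝓝[>] a) atTop) (hb : Tendsto f (𝓝[<] b) atBot) (y : δ) :
    ∃ c ∈ Ioo a b, f c = y := by
  have := nhdsGT_neBot_of_exists_gt ⟨b, hab⟩
  have := nhdsLT_neBot_of_exists_lt ⟨a, hab⟩
  have hla : 𝓝[>] a ≤ 𝓟 (Ioo a b) := by
    rw [← nhdsWithin_Ioo_eq_nhdsGT hab]; exact inf_le_right
  have hlb : 𝓝[<] b ≤ 𝓟 (Ioo a b) := by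
    rw [← nhdsWithin_Ioo_eq_nhdsLT hab]; exact inf_le_right
  exact isPreconnected_Ioo.intermediate_value_Iii hlb hla hf hb ha (mem_univ y)

theorem tendsto_div_pow_nhdsGT_zero {c : ℝ} (hc : 0 < c) {n : ℕ} (hn : n ≠ 0) :
    Tendsto (fun x : ℝ => c / x ^ n) (𝓝[>] 0) atTop := by
  simp_rw [div_eq_mul_inv, ← inv_pow]
  exact ((tendsto_pow_atTop hn).comp tendsto_inv_nhdsGT_zero).const_mul_atTop hc

theorem tendsto_one_add_mul_nhdsGT {ρ : ℝ} (hρ : 0 < ρ) :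
    Tendsto (fun m => 1 + ρ * m) (𝓝[>] (-1 / ρ)) (𝓝[>] 0) := by
  refine tendsto_nhdsWithin_of_tendsto_nhds_of_eventually_within _ ?_ ?_
  · have : 1 + ρ * (-1 / ρ) = 0 := by field_simp; ring
    exact this ▸ (Continuous.tendsto (by fun_prop) _).mono_left nhdsWithin_le_nhds
  · filter_upwards [self_mem_nhdsWithin] with m hm
    have := (div_lt_iff₀ hρ).1 hm
    simp only [mem_Ioi]; linarith

theorem tendsto_neg_one_add_mul_nhdsLT {ρ : ℝ} (hρ : 0 < ρ) :
    Tendsto (fun m => -(1 + ρ * m)) (𝓝[<] (-1 / ρ)) (𝓝[>] 0) := by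
  refine tendsto_nhdsWithin_of_tendsto_nhds_of_eventually_within _ ?_ ?_
  · have : -(1 + ρ * (-1 / ρ)) = 0 := by field_simp; ring
    exact this ▸ (Continuous.tendsto (by fun_prop) _).mono_left nhdsWithin_le_nhds
  · filter_upwards [self_mem_nhdsWithin] with m hm
    have := (lt_div_iff₀ hρ).1 hm
    simp only [mem_Ioi]; linarith

theorem tendsto_div_one_add_mul_pow_nhdsGT {c ρ : ℝ} (hc : 0 < c) (hρ : 0 < ρ) {n : ℕ}
    (hn : n ≠ 0) : Tendsto (fun m => c / (1 + ρ * m) ^ n) (𝓝[>] (-1 / ρ)) atTop :=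
  (tendsto_div_pow_nhdsGT_zero hc hn).comp (tendsto_one_add_mul_nhdsGT hρ)

theorem tendsto_div_one_add_mul_pow_nhdsLT {c ρ : ℝ} (hc : 0 < c) (hρ : 0 < ρ) {n : ℕ}
    (hn : Odd n) : Tendsto (fun m => c / (1 + ρ * m) ^ n) (𝓝[<] (-1 / ρ)) atBot := by
  have := tendsto_neg_atTop_atBot.comp
    ((tendsto_div_pow_nhdsGT_zero hc hn.pos.ne').comp (tendsto_neg_one_add_mul_nhdsLT hρ))
  refine this.congr fun m => ?_
  simp only [Function.comp_apply, hn.neg_pow, div_neg, neg_neg]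

theorem one_add_mul_neg_one_div_ne_zero {ρ σ : ℝ} (hσ : σ ≠ 0) (h : ρ ≠ σ) :
    1 + ρ * (-1 / σ) ≠ 0 := by
  intro h0
  field_simp at h0
  exact h (by linarith)

section PoleSum

variable {ι : Type*} (a ρ : ι → ℝ) (n : ℕ)

theorem continuousAt_sum_div_one_add_mul_pow {s : Finset ι} {x : ℝ}
    (hx : ∀ r ∈ s, 1 + ρ r * x ≠ 0) :
    ContinuousAt (fun m => ∑ r ∈ s, a r / (1 + ρ r * m) ^ n) x :=
  tendsto_finsetSum _ fun r hr =>
    continuousAt_const.div (by fun_prop) (pow_ne_zero n (hx r hr))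

variable [Fintype ι] [DecidableEq ι] {a ρ n}

theorem continuousAt_sum_erase_div_one_add_mul_pow (hρ : Function.Injective ρ) {k : ι}
    (hk : ρ k ≠ 0) :
    ContinuousAt (fun m => ∑ r ∈ Finset.univ.erase k, a r / (1 + ρ r * m) ^ n) (-1 / ρ k) :=
  continuousAt_sum_div_one_add_mul_pow a ρ n fun _r hr =>
    one_add_mul_neg_one_div_ne_zero hk (hρ.ne (Finset.ne_of_mem_erase hr))

theorem tendsto_sum_div_one_add_mul_pow_nhdsGT (hρ : Function.Injective ρ) {k : ι}
    (hk : 0 < ρ k) (ha : 0 < a k) (hn : n ≠ 0) :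
    Tendsto (fun m => ∑ r, a r / (1 + ρ r * m) ^ n) (𝓝[>] (-1 / ρ k)) atTop := by
  have hrest := (continuousAt_sum_erase_div_one_add_mul_pow (a := a) (n := n) hρ hk.ne').tendsto
  exact ((tendsto_div_one_add_mul_pow_nhdsGT ha hk hn).atTop_add
    (hrest.mono_left nhdsWithin_le_nhds)).congr fun m =>
      Finset.add_sum_erase _ _ (Finset.mem_univ k)

theorem tendsto_sum_div_one_add_mul_pow_nhdsLT (hρ : Function.Injective ρ) {k : ι}
    (hk : 0 < ρ k) (ha : 0 < a k) (hn : Odd n) :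
    Tendsto (fun m => ∑ r, a r / (1 + ρ r * m) ^ n) (𝓝[<] (-1 / ρ k)) atBot := by
  have hrest := (continuousAt_sum_erase_div_one_add_mul_pow (a := a) (n := n) hρ hk.ne').tendsto
  exact ((tendsto_div_one_add_mul_pow_nhdsLT ha hk hn).atBot_add
    (hrest.mono_left nhdsWithin_le_nhds)).congr fun m =>
      Finset.add_sum_erase _ _ (Finset.mem_univ k)

end PoleSum

theorem strictMono_neg_one_div {ι : Type*} [Preorder ι] {ρ : ι → ℝ} (hρ : ∀ r, 0 < ρ r)
    (hmono : StrictMono ρ) : StrictMono fun r => -1 / ρ r := fun r s hrs => by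
  simp only [neg_div, neg_lt_neg_iff]
  exact one_div_lt_one_div_of_lt (hρ r) (hmono hrs)

theorem one_add_mul_ne_zero_of_mem_Ioo {ι : Type*} [LinearOrder ι] {ρ : ι → ℝ}
    (hρ : ∀ r, 0 < ρ r) (hmono : StrictMono ρ) {i j : ι} (hij : i ⋖ j) {m : ℝ}
    (hm : m ∈ Ioo (-1 / ρ i) (-1 / ρ j)) (r : ι) : 1 + ρ r * m ≠ 0 := by
  intro h
  have hmr : m = -1 / ρ r := by field_simp [(hρ r).ne']; linarith
  rw [hmr] at hm
  have hpole := strictMono_neg_one_div hρ hmono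
  exact hij.2 (hpole.lt_iff_lt.1 hm.1) (hpole.lt_iff_lt.1 hm.2)

theorem stmt_4_general (L M : ℕ) (hM : 0 < M)
    (ρ : Fin L → ℝ) (hρpos : ∀ r, 0 < ρ r) (hmono : StrictMono ρ)
    (Nr : Fin L → ℕ) (hNr : ∀ r, 0 < Nr r)
    (i j : Fin L) (hij : (i : ℕ) + 1 = (j : ℕ)) :
    ∃ m ∈ Set.Ioo (-1 / ρ i) (-1 / ρ j),
      -2 / m ^ 3 + (1 / (M : ℝ)) * ∑ r, 2 * (Nr r : ℝ) * (ρ r) ^ 3 / (1 + ρ r * m) ^ 3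
        = 0 := by
  have hcov : i ⋖ j := ⟨Fin.lt_def.2 (by omega), fun r hir hrj => by
    rw [Fin.lt_def] at hir hrj; omega⟩
  have hpole_lt : -1 / ρ i < -1 / ρ j := strictMono_neg_one_div hρpos hmono hcov.lt
  have hpole_neg : ∀ r, -1 / ρ r < 0 := fun r => div_neg_of_neg_of_pos (by norm_num) (hρpos r)
  have hweight : ∀ r, 0 < 2 * (Nr r : ℝ) * ρ r ^ 3 := fun r => by
    have := hNr r; have := hρpos r; positivity
  have hM' : (0 : ℝ) < 1 / M := by positivity
  have hcube : ∀ x : ℝ, x < 0 → ContinuousAt (fun m : ℝ => -2 / m ^ 3) x := fun x hx =>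
    continuousAt_const.div (continuousAt_pow x 3) (pow_ne_zero 3 hx.ne)
  apply exists_eq_of_tendsto_nhdsGT_atTop_of_tendsto_nhdsLT_atBot hpole_lt
  · refine continuousOn_of_forall_continuousAt fun m hm => (hcube m ?_).add
      (continuousAt_const.mul (continuousAt_sum_div_one_add_mul_pow _ ρ 3 fun r _ =>
        one_add_mul_ne_zero_of_mem_Ioo hρpos hmono hcov hm r))
    exact hm.2.trans (hpole_neg j)
  · exact ((hcube _ (hpole_neg i)).tendsto.mono_left nhdsWithin_le_nhds).add_atTop
      ((tendsto_sum_div_one_add_mul_pow_nhdsGT hmono.injective (hρpos i) (hweight i)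
        three_ne_zero).const_mul_atTop hM')
  · exact ((hcube _ (hpole_neg j)).tendsto.mono_left nhdsWithin_le_nhds).add_atBot
      ((tendsto_sum_div_one_add_mul_pow_nhdsLT hmono.injective (hρpos j) (hweight j)
        (by decide)).const_mul_atBot hM')

/-- The function g(m) = −2/m³ + (1/M)∑ᵣ 2Nᵣρᵣ³/(1+ρᵣm)³ has at least one zero in
each interval (−1/ρᵢ, −1/ρᵢ₊₁). -/
theorem stmt_4 (L N M : ℕ) (hM : 0 < M)
    (ρ : Fin L → ℝ) (hρpos : ∀ r, 0 < ρ r) (hmono : StrictMono ρ)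
    (Nr : Fin L → ℕ) (hNr : ∀ r, 0 < Nr r) (hsum : ∑ r, Nr r = N)
    (i j : Fin L) (hij : (i : ℕ) + 1 = (j : ℕ)) :
    ∃ m ∈ Set.Ioo (-1 / ρ i) (-1 / ρ j),
      -2 / m ^ 3 + (1 / (M : ℝ)) * ∑ r, 2 * (Nr r : ℝ) * (ρ r) ^ 3 / (1 + ρ r * m) ^ 3
        = 0 :=
  stmt_4_general L M hM ρ hρpos hmono Nr hNr i j hij
end

section
/- Suppose m is holomorphic on a neighborhood of a closed contour γ and its interior, and ξ is a point inside γ with m(ξ) = c ≠ 0 where the first nonvanishing derivative of m − c at ξ has order k ≥ 1. Then the residue at z₁ = ξ of g(z₁) = m′(z₁)·m′(z₂)/((m(z₁) − c)²·m(z₁)·m(z₂)) (with z₂ fixed, m(z₂) = c, m′(z₂) ≠ 0) equals −k·m′(z₂)/m(z₂)³. -/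
/-!
With `B = m'(z₂)` and `c = m(z₂)`, partial fractions in `m` give
`g = B/c² · m'/(m - c)² - B/c³ · m'/(m - c) + B/c³ · m'/m`.
On a small circle around `ξ` the first term is the derivative of `-B/(c² (m - c))` and the last
is holomorphic inside, because `m(ξ) = c ≠ 0`; both integrate to zero. The middle term is
`-B/c³` times the logarithmic derivative of `m - c`, which vanishes to order `k` at `ξ`, so its
integral is `2πi k`.
-/

open Filter Metric Set Topology Complex Real

section SmallSpheres

variable {α : Type*} [PseudoMetricSpace α] {x : α} {p : α → Prop}

theorem eventually_nhdsGT_zero_forall_mem_closedBall (h : ∀ᶠ y in 𝓝 x, p y) :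
    ∀ᶠ r in 𝓝[>] (0 : ℝ), ∀ y ∈ closedBall x r, p y :=
  nhdsWithin_le_nhds (eventually_closedBall_subset h)

theorem eventually_nhdsGT_zero_forall_mem_sphere (h : ∀ᶠ y in 𝓝[≠] x, p y) :
    ∀ᶠ r in 𝓝[>] (0 : ℝ), ∀ y ∈ sphere x r, p y := by
  rw [eventually_nhdsWithin_iff] at h
  filter_upwards [eventually_nhdsGT_zero_forall_mem_closedBall h, self_mem_nhdsWithin]
    with r hr (hr0 : 0 < r) y hy
  exact hr y (sphere_subset_closedBall hy) (ne_of_mem_sphere hy hr0.ne')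

end SmallSpheres

theorem iteratedDeriv_sub_const {𝕜 F : Type*} [NontriviallyNormedField 𝕜] [NormedAddCommGroup F]
    [NormedSpace 𝕜 F] {n : ℕ} {f : 𝕜 → F} {x : 𝕜} (hn : 0 < n) (c : F) :
    iteratedDeriv n (fun z => f z - c) x = iteratedDeriv n f x := by
  simpa only [neg_add_eq_sub] using iteratedDeriv_const_add (f := f) (x := x) hn (-c)

theorem analyticOrderAt_sub_self_eq_of_iteratedDeriv {𝕜 E : Type*} [NontriviallyNormedField 𝕜]
    [CharZero 𝕜] [NormedAddCommGroup E] [NormedSpace 𝕜 E] [CompleteSpace E] {f : 𝕜 → E} {x : 𝕜}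
    {k : ℕ} (hf : AnalyticAt 𝕜 f x) (hk : 1 ≤ k)
    (hvanish : ∀ j, 1 ≤ j → j < k → iteratedDeriv j f x = 0)
    (hnonvanish : iteratedDeriv k f x ≠ 0) :
    analyticOrderAt (fun z => f z - f x) x = k := by
  rw [analyticOrderAt_eq_nat_iff_iteratedDeriv_eq_zero (hf.fun_sub analyticAt_const),
    iteratedDeriv_sub_const hk]
  refine ⟨fun j hj => ?_, hnonvanish⟩
  rcases Nat.eq_zero_or_pos j with rfl | hj0
  · simp
  · rw [iteratedDeriv_sub_const hj0, hvanish j hj0 hj]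

theorem AnalyticAt.logDeriv {𝕜 : Type*} [NontriviallyNormedField 𝕜] [CompleteSpace 𝕜]
    {f : 𝕜 → 𝕜} {x : 𝕜} (hf : AnalyticAt 𝕜 f x) (h0 : f x ≠ 0) :
    AnalyticAt 𝕜 (logDeriv f) x :=
  hf.deriv.div hf h0

theorem logDeriv_sub_pow_mul {𝕜 : Type*} [NontriviallyNormedField 𝕜] {f : 𝕜 → 𝕜} {ξ z : 𝕜}
    (k : ℕ) (hz : z ≠ ξ) (hf : DifferentiableAt 𝕜 f z) (h0 : f z ≠ 0) :
    logDeriv (fun y => (y - ξ) ^ k * f y) z = k * (z - ξ)⁻¹ + logDeriv f z := by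
  have hzξ : z - ξ ≠ 0 := sub_ne_zero.mpr hz
  rw [logDeriv_mul (f := fun y => (y - ξ) ^ k) z (pow_ne_zero k hzξ) h0 (by fun_prop) hf,
    logDeriv_fun_pow (by fun_prop), logDeriv_apply, deriv_sub_const, deriv_id'', one_div]

theorem circleIntegrable_of_forall_analyticAt {E : Type*} [NormedAddCommGroup E]
    [NormedSpace ℂ E] {f : ℂ → E} {c : ℂ} {R : ℝ} (hR : 0 ≤ R)
    (hf : ∀ z ∈ sphere c R, AnalyticAt ℂ f z) : CircleIntegrable f c R :=
  ContinuousOn.circleIntegrable hR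
    (continuousOn_of_forall_continuousAt fun z hz => (hf z hz).continuousAt)

theorem circleIntegral_deriv_div_sq_eq_zero {f : ℂ → ℂ} {c : ℂ} {R : ℝ} (hR : 0 ≤ R)
    (hf : ∀ z ∈ sphere c R, DifferentiableAt ℂ f z ∧ f z ≠ 0) :
    ∮ z in C(c, R), deriv f z / f z ^ 2 = 0 :=
  circleIntegral.integral_eq_zero_of_hasDerivWithinAt (f := fun z => -(f z)⁻¹) hR fun z hz => by
    have hinv := ((hf z hz).1.hasDerivAt.inv (hf z hz).2).neg
    rw [neg_div, neg_neg] at hinv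
    exact hinv.hasDerivWithinAt

theorem circleIntegral_logDeriv_eq_zero {f : ℂ → ℂ} {c : ℂ} {R : ℝ} (hR : 0 ≤ R)
    (hf : ∀ z ∈ closedBall c R, AnalyticAt ℂ f z ∧ f z ≠ 0) :
    ∮ z in C(c, R), logDeriv f z = 0 := by
  have hd : DifferentiableOn ℂ (logDeriv f) (closedBall c R) := fun z hz =>
    ((hf z hz).1.logDeriv (hf z hz).2).differentiableAt.differentiableWithinAt
  exact (hd.mono closure_ball_subset_closedBall).diffContOnCl.circleIntegral_eq_zero hR

theorem eventually_circleIntegral_logDeriv_eq {f : ℂ → ℂ} {ξ : ℂ} {k : ℕ}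
    (hf : AnalyticAt ℂ f ξ) (hord : analyticOrderAt f ξ = k) :
    ∀ᶠ ε in 𝓝[>] (0 : ℝ), ∮ z in C(ξ, ε), logDeriv f z = 2 * π * I * k := by
  obtain ⟨h, hh, hh0, hfh⟩ := hf.analyticOrderAt_eq_natCast.mp hord
  have hnear : ∀ᶠ z in 𝓝 ξ, AnalyticAt ℂ h z ∧ h z ≠ 0 :=
    hh.eventually_analyticAt.and (hh.continuousAt.eventually_ne hh0)
  have hsplit : ∀ᶠ z in 𝓝[≠] ξ, AnalyticAt ℂ (fun z => k * (z - ξ)⁻¹) z ∧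
      logDeriv f z = k * (z - ξ)⁻¹ + logDeriv h z := by
    filter_upwards [nhdsWithin_le_nhds (hfh.eventually_nhds.and hnear), self_mem_nhdsWithin]
      with z ⟨hfz, hhz, hhz0⟩ (hz : z ≠ ξ)
    refine ⟨by fun_prop (disch := exact sub_ne_zero.mpr hz), ?_⟩
    rw [(logDeriv_congr_nhds (g := fun y => (y - ξ) ^ k * h y) hfz).eq_of_nhds,
      logDeriv_sub_pow_mul k hz hhz.differentiableAt hhz0]
  filter_upwards [self_mem_nhdsWithin, eventually_nhdsGT_zero_forall_mem_closedBall hnear,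
    eventually_nhdsGT_zero_forall_mem_sphere hsplit] with ε (hε : 0 < ε) hball hsph
  have hlog : ∀ z ∈ sphere ξ ε, AnalyticAt ℂ (logDeriv h) z := fun z hz =>
    (hball z (sphere_subset_closedBall hz)).1.logDeriv (hball z (sphere_subset_closedBall hz)).2
  rw [circleIntegral.integral_congr hε.le fun z hz => (hsph z hz).2,
    circleIntegral.integral_add
      (circleIntegrable_of_forall_analyticAt hε.le fun z hz => (hsph z hz).1)
      (circleIntegrable_of_forall_analyticAt hε.le hlog),
    circleIntegral.integral_const_mul, circleIntegral.integral_sub_center_inv ξ hε.ne',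
    circleIntegral_logDeriv_eq_zero hε.le hball]
  ring

theorem mul_div_sub_sq_mul_mul {K : Type*} [Field K] {w c : K} (hw : w ≠ 0) (hwc : w - c ≠ 0)
    (hc : c ≠ 0) (a b : K) :
    a * b / ((w - c) ^ 2 * w * c) =
      b * ((c ^ 2)⁻¹ * (a / (w - c) ^ 2) - (c ^ 3)⁻¹ * (a / (w - c)) + (c ^ 3)⁻¹ * (a / w)) := by
  field_simp
  ring

theorem circleIntegral_deriv_mul_div_sub_sq_mul_mul {m : ℂ → ℂ} {ξ b c : ℂ} {ε : ℝ} (hε : 0 ≤ ε)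
    (hc : c ≠ 0) (hball : ∀ z ∈ closedBall ξ ε, AnalyticAt ℂ m z ∧ m z ≠ 0)
    (hsph : ∀ z ∈ sphere ξ ε, m z - c ≠ 0) :
    ∮ z in C(ξ, ε), deriv m z * b / ((m z - c) ^ 2 * m z * c) =
      -(b / c ^ 3) * ∮ z in C(ξ, ε), logDeriv (fun z => m z - c) z := by
  set f : ℂ → ℂ := fun z => m z - c
  have hm : ∀ z ∈ sphere ξ ε, AnalyticAt ℂ m z ∧ m z ≠ 0 := fun z hz =>
    hball z (sphere_subset_closedBall hz)
  have hf : ∀ z ∈ sphere ξ ε, AnalyticAt ℂ f z := fun z hz => (hm z hz).1.fun_sub analyticAt_const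
  have hF1 : ∀ z ∈ sphere ξ ε, AnalyticAt ℂ (fun z => deriv f z / f z ^ 2) z := fun z hz =>
    (hf z hz).deriv.div ((hf z hz).pow 2) (pow_ne_zero 2 (hsph z hz))
  have hF2 : ∀ z ∈ sphere ξ ε, AnalyticAt ℂ (logDeriv f) z := fun z hz =>
    (hf z hz).logDeriv (hsph z hz)
  have hF3 : ∀ z ∈ sphere ξ ε, AnalyticAt ℂ (logDeriv m) z := fun z hz =>
    (hm z hz).1.logDeriv (hm z hz).2
  have hsplit : EqOn (fun z => deriv m z * b / ((m z - c) ^ 2 * m z * c))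
      (fun z => b * ((c ^ 2)⁻¹ * (deriv f z / f z ^ 2) - (c ^ 3)⁻¹ * logDeriv f z
        + (c ^ 3)⁻¹ * logDeriv m z)) (sphere ξ ε) := fun z hz => by
    simp only [logDeriv_apply, f, deriv_sub_const]
    exact mul_div_sub_sq_mul_mul (hm z hz).2 (hsph z hz) hc _ _
  rw [circleIntegral.integral_congr hε hsplit, circleIntegral.integral_const_mul,
    circleIntegral.integral_add
      (circleIntegrable_of_forall_analyticAt hε fun z hz => by
        have := hF1 z hz; have := hF2 z hz; fun_prop)
      (circleIntegrable_of_forall_analyticAt hε fun z hz => by have := hF3 z hz; fun_prop),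
    circleIntegral.integral_sub
      (circleIntegrable_of_forall_analyticAt hε fun z hz => by have := hF1 z hz; fun_prop)
      (circleIntegrable_of_forall_analyticAt hε fun z hz => by have := hF2 z hz; fun_prop),
    circleIntegral.integral_const_mul, circleIntegral.integral_const_mul,
    circleIntegral.integral_const_mul,
    circleIntegral_deriv_div_sq_eq_zero hε fun z hz => ⟨(hf z hz).differentiableAt, hsph z hz⟩,
    circleIntegral_logDeriv_eq_zero hε hball]
  ring

theorem stmt_8_general (m : ℂ → ℂ) (U : Set ℂ) (hU : IsOpen U) (ξ z₂ : ℂ) (c : ℂ)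
    (hξU : ξ ∈ U) (hm : DifferentiableOn ℂ m U)
    (hc : m ξ = c) (hc0 : c ≠ 0) (k : ℕ) (hk : 1 ≤ k)
    (hvanish : ∀ j, 1 ≤ j → j < k → iteratedDeriv j m ξ = 0)
    (hnonvanish : iteratedDeriv k m ξ ≠ 0)
    (hz2 : m z₂ = c)
    (g : ℂ → ℂ)
    (hg : ∀ z₁, g z₁ = deriv m z₁ * deriv m z₂
        / ((m z₁ - c) ^ 2 * m z₁ * m z₂)) :
    ∃ ε₀ > (0 : ℝ), ∀ ε ∈ Set.Ioo (0 : ℝ) ε₀,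
      (2 * Real.pi * Complex.I)⁻¹ * (∮ z in C(ξ, ε), g z)
        = -(k : ℂ) * deriv m z₂ / (m z₂) ^ 3 := by
  have hmU : AnalyticOnNhd ℂ m U := hm.analyticOnNhd hU
  have hf : AnalyticAt ℂ (fun z => m z - c) ξ := (hmU ξ hξU).fun_sub analyticAt_const
  have hord : analyticOrderAt (fun z => m z - c) ξ = k := by
    simpa only [hc] using
      analyticOrderAt_sub_self_eq_of_iteratedDeriv (hmU ξ hξU) hk hvanish hnonvanish
  have hnear : ∀ᶠ z in 𝓝 ξ, AnalyticAt ℂ m z ∧ m z ≠ 0 :=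
    (eventually_of_mem (hU.mem_nhds hξU) hmU).and
      ((hmU ξ hξU).continuousAt.eventually_ne (hc ▸ hc0))
  have hpunct : ∀ᶠ z in 𝓝[≠] ξ, m z - c ≠ 0 :=
    hf.eventually_eq_zero_or_eventually_ne_zero.resolve_left fun h0 => by
      simp [analyticOrderAt_eq_top.mpr h0] at hord
  have hresidue : ∀ᶠ ε in 𝓝[>] (0 : ℝ), (2 * π * I)⁻¹ * (∮ z in C(ξ, ε), g z)
      = -(k : ℂ) * deriv m z₂ / (m z₂) ^ 3 := by
    filter_upwards [self_mem_nhdsWithin, eventually_circleIntegral_logDeriv_eq hf hord,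
      eventually_nhdsGT_zero_forall_mem_closedBall hnear,
      eventually_nhdsGT_zero_forall_mem_sphere hpunct] with ε (hε : 0 < ε) hlog hball hsph
    simp only [hg, hz2]
    rw [circleIntegral_deriv_mul_div_sub_sq_mul_mul hε.le hc0 hball hsph, hlog]
    field_simp
  exact (nhdsGT_basis 0).eventually_iff.mp hresidue

/-- At a point ξ where m(ξ) = c = m(z₂) ≠ 0 with first nonvanishing derivative of
m − c of order k, the residue of g(z₁) = m′(z₁)m′(z₂)/((m(z₁)−c)²m(z₁)m(z₂))
equals −k·m′(z₂)/m(z₂)³, expressed via small circle integrals around ξ. -/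
theorem stmt_8 (m : ℂ → ℂ) (U : Set ℂ) (hU : IsOpen U) (ξ z₂ : ℂ) (c : ℂ)
    (hξU : ξ ∈ U) (hz₂U : z₂ ∈ U) (hm : DifferentiableOn ℂ m U)
    (hc : m ξ = c) (hc0 : c ≠ 0) (k : ℕ) (hk : 1 ≤ k)
    (hvanish : ∀ j, 1 ≤ j → j < k → iteratedDeriv j m ξ = 0)
    (hnonvanish : iteratedDeriv k m ξ ≠ 0)
    (hz2 : m z₂ = c) (hz2' : deriv m z₂ ≠ 0) (hne : z₂ ≠ ξ)
    (g : ℂ → ℂ)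
    (hg : ∀ z₁, g z₁ = deriv m z₁ * deriv m z₂
        / ((m z₁ - c) ^ 2 * m z₁ * m z₂)) :
    ∃ ε₀ > (0 : ℝ), ∀ ε ∈ Set.Ioo (0 : ℝ) ε₀,
      (2 * Real.pi * Complex.I)⁻¹ * (∮ z in C(ξ, ε), g z)
        = -(k : ℂ) * deriv m z₂ / (m z₂) ^ 3 :=
  stmt_8_general m U hU ξ z₂ c hξU hm hc hc0 k hk hvanish hnonvanish hz2 g hg
end
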